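/- Let A > 0, δ₀ ∈ (0,1), and let p = (p_n)_{n∈ℤ} be a sequence with |p_n| ≤ δ₀ for all n. Then the family (m̄_n(A,p))_{n∈ℤ} is well defined, consists of positive bounded numbers, solves the recurrence m̄_{n+1}(A,p) = ζ_n(p) m̄_n(A,p)² for all n ∈ ℤ, and satisfies m̄_n(A,p) = O(2^{n}) as n → −∞ and m̄_n(A,p) = O(2^{(β−α)n} e^{−A 2^{n}}) as n → +∞. Moreover ∂m̄_n/∂A = −2^{n} m̄_n, ∂m̄_n/∂p_k = 0 for k < n, and |∂m̄_n/∂p_k| ≤ c 2^{n−k} m̄_n for k ≥ n, for a constant c > 0 depending only on the kernels. -/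

import Mathlib

open Real MeasureTheory Filter Topology Asymptotics

noncomputable section

/-- The assumptions on the coagulation rate function `k` and the fragmentation
rate function `γ`, together with all the fixed structural constants. -/
structure Kernels where
  (α αb k₀ k₁ k₂ β βt βb γ₀ γ₁ γ₂ : ℝ)
  (k γ : ℝ → ℝ)
  hα : 0 < α ∧ α < 1
  hαb : 1 < αb
  hk₀ : 0 < k₀
  hk₁ : 0 < k₁
  hk₂ : 0 < k₂
  hβ : 1 < β ∧ β < 2
  hβt : βt < β
  hβb : 1 < βb
  hγ₀ : 0 < γ₀
  hγ₁ : 0 < γ₁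
  hγ₂ : 0 < γ₂
  hkC2 : ContDiffOn ℝ 2 k (Set.Ioi 0)
  hkpos : ∀ ξ : ℝ, 0 < ξ → 0 < k ξ
  hkInfty : Tendsto (fun ξ : ℝ => k ξ / ξ ^ (α + 1)) atTop (𝓝 1)
  hkZero : (fun ξ : ℝ => k ξ - k₀) =O[𝓝[>] (0:ℝ)] fun ξ : ℝ => ξ ^ αb
  hk'ge : ∀ ξ : ℝ, 1 ≤ ξ → |deriv k ξ| ≤ k₁ * ξ ^ α
  hk'le : ∀ ξ : ℝ, 0 < ξ → ξ ≤ 1 → |deriv k ξ| ≤ k₁ * ξ ^ (αb - 1)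
  hk''ge : ∀ ξ : ℝ, 1 ≤ ξ → |deriv (deriv k) ξ| ≤ k₂ * ξ ^ (α - 1)
  hk''le : ∀ ξ : ℝ, 0 < ξ → ξ ≤ 1 → |deriv (deriv k) ξ| ≤ k₂ * ξ ^ (αb - 2)
  hγC2 : ContDiffOn ℝ 2 γ (Set.Ioi 0)
  hγpos : ∀ ξ : ℝ, 0 < ξ → 0 < γ ξ
  hγInfty : (fun ξ : ℝ => γ ξ - ξ ^ β) =O[atTop] fun ξ : ℝ => ξ ^ βt
  hγZero : (fun ξ : ℝ => γ ξ - γ₀) =O[𝓝[>] (0:ℝ)] fun ξ : ℝ => ξ ^ βb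
  hγ'ge : ∀ ξ : ℝ, 1 ≤ ξ → |deriv γ ξ| ≤ γ₁ * ξ ^ (β - 1)
  hγ'le : ∀ ξ : ℝ, 0 < ξ → ξ ≤ 1 → |deriv γ ξ| ≤ γ₁ * ξ ^ (βb - 1)
  hγ''ge : ∀ ξ : ℝ, 1 ≤ ξ → |deriv (deriv γ) ξ| ≤ γ₂ * ξ ^ (β - 2)
  hγ''le : ∀ ξ : ℝ, 0 < ξ → ξ ≤ 1 → |deriv (deriv γ) ξ| ≤ γ₂ * ξ ^ (βb - 2)

/-- `ζ_n(p) = ln 2 · 2^{-(n+p_n)} k(2^{n+p_n}) / γ(2^{n+1+p_{n+1}})`. -/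
def Kernels.zeta (KD : Kernels) (p : ℤ → ℝ) (n : ℤ) : ℝ :=
  Real.log 2 * (2:ℝ) ^ (-((n:ℝ) + p n)) * KD.k ((2:ℝ) ^ ((n:ℝ) + p n)) /
    KD.γ ((2:ℝ) ^ ((n:ℝ) + 1 + p (n + 1)))

/-- `ζ_{n,ρ}` for a constant shift `ρ`. -/
def Kernels.zetaRho (KD : Kernels) (ρ : ℝ) (n : ℤ) : ℝ := KD.zeta (fun _ => ρ) n

/-- `θ_n(p) = 2 ζ_{n+1}(p)/ζ_n(p)`. -/
def Kernels.thetaSeq (KD : Kernels) (p : ℤ → ℝ) (n : ℤ) : ℝ :=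
  2 * KD.zeta p (n + 1) / KD.zeta p n

/-- `μ̄_n(A,p) = e^{-A 2^n} exp(-2^n Σ_{j=n+1}^∞ 2^{-j} ln θ_{j-1}(p))`. -/
def Kernels.mubar (KD : Kernels) (A : ℝ) (p : ℤ → ℝ) (n : ℤ) : ℝ :=
  Real.exp (-A * (2:ℝ) ^ (n:ℝ)) *
    Real.exp (-((2:ℝ) ^ (n:ℝ)) *
      ∑' j : ℕ, (2:ℝ) ^ (-((n:ℝ) + 1 + (j:ℝ))) * Real.log (KD.thetaSeq p (n + (j:ℤ))))

/-- `m̄_n(A,p) = 2 μ̄_n(A,p) / ζ_n(p)`. -/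
def Kernels.mbar (KD : Kernels) (A : ℝ) (p : ℤ → ℝ) (n : ℤ) : ℝ :=
  2 * KD.mubar A p n / KD.zeta p n

/-- The weighted norm `‖y‖_θ = sup_{n≤0} 2^n |y_n| + sup_{n>0} 2^{θ n} |y_n|`,
valued in `ℝ≥0∞` so that membership in `𝒴_θ` is expressed by `Ynorm θ y < ⊤`. -/
def Ynorm (θ : ℝ) (y : ℤ → ℝ) : ENNReal :=
  (⨆ n : {m : ℤ // m ≤ 0}, ENNReal.ofReal ((2:ℝ) ^ ((n.1 : ℝ)) * |y n.1|)) +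
    ⨆ n : {m : ℤ // 0 < m}, ENNReal.ofReal ((2:ℝ) ^ (θ * (n.1 : ℝ)) * |y n.1|)

/-- Discrete derivative `D⁺_n(y) = y_{n+1} - y_n`. -/
def Dplus (y : ℤ → ℝ) (n : ℤ) : ℝ := y (n + 1) - y n

/-- Admissible test functions: continuous, finite limit at `-∞`, and `φ(x) ≤ C 2^x`
for large `x`. -/
def TestFun (φ : ℝ → ℝ) : Prop :=
  Continuous φ ∧ (∃ L : ℝ, Tendsto φ atBot (𝓝 L)) ∧
    ∃ C x₀ : ℝ, ∀ x : ℝ, x₀ ≤ x → φ x ≤ C * (2:ℝ) ^ x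

/-- Right-hand side of the weak formulation of the coagulation–fragmentation
equation in logarithmic variables, for a kernel `Kl` (in logarithmic variables)
and a fragmentation rate `gam`. -/
def weakRHS (Kl : ℝ → ℝ → ℝ) (gam : ℝ → ℝ) (μ : Measure ℝ) (φ : ℝ → ℝ) : ℝ :=
  Real.log 2 / 2 *
      ∫ y, ∫ z, Kl y z * (φ (Real.logb 2 ((2:ℝ) ^ y + (2:ℝ) ^ z)) - φ y - φ z) ∂μ ∂μ -
    1 / 4 * ∫ y, gam ((2:ℝ) ^ y) * (φ y - 2 * φ (y - 1)) ∂μ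

/-- Weak solution of the coagulation–fragmentation equation in logarithmic
variables on the time set `S`, with initial datum `g₀`. -/
def IsWeakSolutionOn (β : ℝ) (Kl : ℝ → ℝ → ℝ) (gam : ℝ → ℝ) (S : Set ℝ)
    (g₀ : Measure ℝ) (g : ℝ → Measure ℝ) : Prop :=
  g 0 = g₀ ∧
  (∀ t ∈ S, ∫⁻ x, ENNReal.ofReal (1 + (2:ℝ) ^ ((β + 1) * x)) ∂(g t) < ⊤) ∧
  (∀ φ : ℝ → ℝ, TestFun φ → ContinuousOn (fun t => ∫ x, φ x ∂(g t)) S) ∧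
  ∀ φ : ℝ → ℝ, TestFun φ → ∀ t ∈ S,
    HasDerivWithinAt (fun s => ∫ x, φ x ∂(g s)) (weakRHS Kl gam (g t) φ) S t

/-- The structural assumptions on the cut-off `Q` and the full coagulation kernel. -/
structure CoagData extends Kernels where
  Q : ℝ → ℝ
  hQC2 : ContDiff ℝ 2 Q
  hQ0 : ∀ x, 0 ≤ Q x
  hQ1 : Q 0 = 1
  hQeven : ∀ x, Q (-x) = Q x
  hQsupp : Function.support Q ⊆ Set.Ioo (-(1/3) : ℝ) (1/3)

/-- The coagulation kernel `K(ξ,η) = (ξ+η)⁻¹ k((ξ+η)/2) Q(2η/(ξ+η) - 1)`. -/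
def CoagData.K (S : CoagData) (ξ η : ℝ) : ℝ :=
  (ξ + η)⁻¹ * S.k ((ξ + η) / 2) * S.Q (2 * η / (ξ + η) - 1)

/-- The coagulation kernel in logarithmic variables, `K(2^y, 2^z)`. -/
def CoagData.Klog (S : CoagData) (y z : ℝ) : ℝ := S.K ((2:ℝ) ^ y) ((2:ℝ) ^ z)

/-- Truncated coagulation kernel in logarithmic variables:
`K_N(2^y,2^z) = K(2^y,2^z) 1_{y < N - 1/2}`. -/
def CoagData.KlogN (S : CoagData) (N : ℕ) (y z : ℝ) : ℝ :=
  if y < (N:ℝ) - 1/2 then S.Klog y z else 0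

/-- Truncated fragmentation rate: `γ_N(ξ) = γ(ξ) 1_{ξ < 2^{N+1/2}}`. -/
def Kernels.gammaTrunc (KD : Kernels) (N : ℕ) (ξ : ℝ) : ℝ :=
  if ξ < (2:ℝ) ^ ((N:ℝ) + 1/2) then KD.γ ξ else 0

/-- `m_n(t)` : the mass of the measure in the interval `I_n = (n-δ₀, n+δ₀)`. -/
def mIn (δ₀ : ℝ) (μ : Measure ℝ) (n : ℤ) : ℝ :=
  (μ (Set.Ioo ((n:ℝ) - δ₀) ((n:ℝ) + δ₀))).toReal

/-- `p_n(t)` : normalized first moment of the measure around the peak `n`. -/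
def pIn (δ₀ : ℝ) (μ : Measure ℝ) (n : ℤ) : ℝ :=
  (mIn δ₀ μ n)⁻¹ * ∫ x in Set.Ioo ((n:ℝ) - δ₀) ((n:ℝ) + δ₀), (x - (n:ℝ)) ∂μ

/-- `q_n(t)` : normalized second moment of the measure around the peak `n`. -/
def qIn (δ₀ : ℝ) (μ : Measure ℝ) (n : ℤ) : ℝ :=
  (mIn δ₀ μ n)⁻¹ *
    ∫ x in Set.Ioo ((n:ℝ) - δ₀) ((n:ℝ) + δ₀), (x - (n:ℝ) - pIn δ₀ μ n) ^ 2 ∂μ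

/-- `m_n⁰ = μ([n-1/2, n+1/2))`. -/
def mhalf (μ : Measure ℝ) (n : ℤ) : ℝ :=
  (μ (Set.Ico ((n:ℝ) - 1/2) ((n:ℝ) + 1/2))).toReal

/-- `p_n⁰ = (m_n⁰)⁻¹ ∫_{[n-1/2,n+1/2)} (x-n) dμ`. -/
def phalf (μ : Measure ℝ) (n : ℤ) : ℝ :=
  (mhalf μ n)⁻¹ * ∫ x in Set.Ico ((n:ℝ) - 1/2) ((n:ℝ) + 1/2), (x - (n:ℝ)) ∂μ

/-- The measure is supported in `∪_{n∈ℤ} (n-δ₀, n+δ₀)`. -/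
def suppInPeaks (δ₀ : ℝ) (μ : Measure ℝ) : Prop :=
  μ ((⋃ n : ℤ, Set.Ioo ((n:ℝ) - δ₀) ((n:ℝ) + δ₀))ᶜ) = 0

/-- Characterization of the stationary peak coefficients `a_n(A,ρ)`:
positive, bounded, solving the recurrence `a_{n+1} = ζ_{n,ρ} a_n²`, with
`a_n = O(2^n)` as `n → -∞` and `a_n = O(2^{(β-α)n} e^{-A 2^n})` as `n → ∞`. -/
def IsStationaryFamily (KD : Kernels) (A ρ : ℝ) (a : ℤ → ℝ) : Prop :=
  (∀ n, 0 < a n) ∧ (∃ B : ℝ, ∀ n, a n ≤ B) ∧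
  (∀ n : ℤ, a (n + 1) = KD.zetaRho ρ n * a n ^ 2) ∧
  ((fun n : ℤ => a n) =O[atBot] fun n : ℤ => (2:ℝ) ^ (n:ℝ)) ∧
  ((fun n : ℤ => a n) =O[atTop]
    fun n : ℤ => (2:ℝ) ^ ((KD.β - KD.α) * (n:ℝ)) * Real.exp (-A * (2:ℝ) ^ (n:ℝ)))

/-- Hypothesis (⋆) on a time-dependent shift sequence `p(t)` with derivative `p'`. -/
def StarHyp (KD : Kernels) (θb₁ η₀ ν : ℝ) (p p' : ℝ → ℤ → ℝ) : Prop :=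
  (∀ t : ℝ, 0 < t → ∀ n : ℤ, |p t n| ≤ η₀) ∧
  (∀ t : ℝ, 0 < t → ∀ n : ℤ, HasDerivAt (fun s => p s n) (p' t n) t) ∧
  (∀ t : ℝ, 0 < t →
    Ynorm θb₁ (Dplus (p t)) ≤
      ENNReal.ofReal (η₀ * t ^ (-(θb₁ / KD.β)) * Real.exp (-(ν * t) / 2))) ∧
  (∀ t : ℝ, 0 < t →
    Ynorm (θb₁ - KD.β) (p' t) ≤
      ENNReal.ofReal (η₀ * (1 + t ^ (-(θb₁ / KD.β))) * Real.exp (-(ν * t) / 2)))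

/-- Coefficient `σ_n(t)` of the time-dependent linearized problem. -/
def Kernels.sigmaLin (KD : Kernels) (AM : ℝ) (p : ℝ → ℤ → ℝ) (n : ℤ) (t : ℝ) : ℝ :=
  8 * KD.mubar AM (p t) n * KD.γ ((2:ℝ) ^ ((n:ℝ) + 1 + p t (n + 1))) /
    KD.γ ((2:ℝ) ^ ((n:ℝ) + p t n))

/-- Solution of the time-dependent linearized problem with datum `y0` at time `t₀`. -/
def IsLinSol (KD : Kernels) (AM : ℝ) (p : ℝ → ℤ → ℝ) (θ t₀ : ℝ)
    (y0 : ℤ → ℝ) (y : ℝ → ℤ → ℝ) : Prop :=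
  y t₀ = y0 ∧ (∀ t ∈ Set.Ici t₀, Ynorm θ (y t) < ⊤) ∧
    ∀ t ∈ Set.Ici t₀, ∀ n : ℤ,
      HasDerivWithinAt (fun s => y s n)
        (KD.γ ((2:ℝ) ^ ((n:ℝ) + p t n)) / 4 *
          (y t (n - 1) - y t n - KD.sigmaLin AM p n t * (y t n - y t (n + 1))))
        (Set.Ici t₀) t

/-- Coefficient `σ^N_n(t)` of the truncated time-dependent linearized problem. -/
def Kernels.sigmaLinT (KD : Kernels) (AM : ℝ) (N : ℤ) (p : ℝ → ℤ → ℝ) (n : ℤ) (t : ℝ) : ℝ :=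
  if n < N then KD.sigmaLin AM p n t else 0

/-- Solution of the truncated time-dependent linearized problem. -/
def IsLinSolTrunc (KD : Kernels) (AM : ℝ) (N : ℤ) (p : ℝ → ℤ → ℝ) (θ t₀ : ℝ)
    (y0 : ℤ → ℝ) (y : ℝ → ℤ → ℝ) : Prop :=
  y t₀ = y0 ∧ (∀ t ∈ Set.Ici t₀, Ynorm θ (y t) < ⊤) ∧
    (∀ t ∈ Set.Ici t₀, ∀ n : ℤ, N < n → y t n = 0) ∧
    ∀ t ∈ Set.Ici t₀, ∀ n : ℤ, n ≤ N →
      HasDerivWithinAt (fun s => y s n)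
        (KD.γ ((2:ℝ) ^ ((n:ℝ) + p t n)) / 4 *
          (y t (n - 1) - y t n - KD.sigmaLinT AM N p n t * (y t n - y t (n + 1))))
        (Set.Ici t₀) t

/-- `‖g₀‖ = sup_{n<0} 2^{-n} g₀([n,n+1)) + g₀([0,∞))`, valued in `ℝ≥0∞`. -/
def gnorm (μ : Measure ℝ) : ENNReal :=
  (⨆ n : {m : ℤ // m < 0},
      ENNReal.ofReal ((2:ℝ) ^ (-(n.1 : ℝ))) * μ (Set.Ico ((n.1 : ℝ)) ((n.1 : ℝ) + 1))) +
    μ (Set.Ici (0:ℝ))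

/-!
Write `L_m = log ζ_m(p)` and `T_n = ∑_{i ≥ 0} 2^{-(i+1)} L_{n+i}`. Since
`log θ_m = log 2 + L_{m+1} - L_m` and `2 T_n = L_n + T_{n+1}`, the series defining
`μ̄_n` telescopes and `m̄_n = exp (-A 2^n - T_n)`; the recurrence is the shift identity for
`T`, and the `A`-derivative is immediate.

The kernels satisfy `log k(ξ) = (α+1) log⁺ ξ + O(1)` and `log γ(ξ) = β log⁺ ξ + O(1)`
(continuity plus the limits at `0` and `∞`), so for bounded `p`, `L_m` stays within `O(1)` of
an explicit piecewise linear function of `m`. This gives the summability and lower bounds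
`T_n ≥ -n log 2 - O(1)` for `n ≤ 0` and `T_n ≥ (α - β) n log 2 - O(1)` for `n ≥ 0`, hence
both asymptotics, and boundedness because `m̄_n → 0` at both ends.

Only `L_{k-1}` and `L_k` depend on `p_k`, with derivatives bounded by the elasticities
`ξ k'(ξ)/k(ξ)` and `ξ γ'(ξ)/γ(ξ)`, which are bounded by the derivative assumptions.
Differentiating `T_n` termwise then gives `∂m̄_n/∂p_k = 0` for `k < n` and `O(2^{n-k}) m̄_n`
for `k ≥ n`.
-/

section KernelGrowth

variable {f : ℝ → ℝ} {a r s : ℝ}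

theorem tendsto_nhdsGT_of_isBigO_rpow (hr : 0 < r)
    (h : (fun ξ => f ξ - a) =O[𝓝[>] (0 : ℝ)] fun ξ => ξ ^ r) :
    Tendsto f (𝓝[>] 0) (𝓝 a) := by
  have hpow : Tendsto (fun ξ : ℝ => ξ ^ r) (𝓝[>] 0) (𝓝 0) := by
    simpa [Real.zero_rpow hr.ne'] using
      (Real.continuousAt_rpow_const 0 r (Or.inr hr.le)).tendsto.mono_left nhdsWithin_le_nhds
  simpa using (h.trans_tendsto hpow).add_const a

theorem tendsto_div_rpow_of_isBigO (hrs : r < s)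
    (h : (fun ξ => f ξ - ξ ^ s) =O[atTop] fun ξ => ξ ^ r) :
    Tendsto (fun ξ => f ξ / ξ ^ s) atTop (𝓝 1) := by
  have hquot : (fun ξ => f ξ / ξ ^ s - 1) =O[atTop] fun ξ => ξ ^ (r - s) := by
    have hprod := h.mul (isBigO_refl (fun ξ : ℝ => ξ ^ (-s)) atTop)
    refine hprod.congr' ?_ ?_
    · filter_upwards [eventually_gt_atTop 0] with ξ hξ
      have hs : ξ ^ s ≠ 0 := (Real.rpow_pos_of_pos hξ s).ne'
      rw [Real.rpow_neg hξ.le]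
      field_simp
    · filter_upwards [eventually_gt_atTop 0] with ξ hξ
      rw [← Real.rpow_add hξ, sub_eq_add_neg]
  have hdecay : Tendsto (fun ξ : ℝ => ξ ^ (r - s)) atTop (𝓝 0) := by
    simpa using tendsto_rpow_neg_atTop (by linarith : 0 < s - r)
  simpa using (hquot.trans_tendsto hdecay).add_const 1

theorem exists_abs_log_sub_mul_posLog_le (hcont : ContinuousOn f (Set.Ioi 0))
    (hpos : ∀ ξ, 0 < ξ → 0 < f ξ) (ha : 0 < a) (h0 : Tendsto f (𝓝[>] 0) (𝓝 a))
    (hinf : Tendsto (fun ξ => f ξ / ξ ^ s) atTop (𝓝 1)) :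
    ∃ M, ∀ ξ, 0 < ξ → |log (f ξ) - s * log⁺ ξ| ≤ M := by
  -- in the variable `t = log ξ` the error is continuous on `ℝ` with finite limits at `±∞`
  set u : ℝ → ℝ := fun t => log (f (exp t)) - s * max 0 t
  have hu : Continuous u :=
    ((hcont.comp_continuous continuous_exp fun t => exp_pos t).log
      fun t => (hpos _ (exp_pos t)).ne').sub
        (continuous_const.mul (continuous_const.max continuous_id))
  have hbot : Tendsto u atBot (𝓝 (log a)) := by
    have hlog := ((continuousAt_log ha.ne').tendsto.comp (h0.comp tendsto_exp_atBot_nhdsGT))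
    refine hlog.congr' ?_
    filter_upwards [eventually_le_atBot 0] with t ht
    simp [u, max_eq_left ht]
  have htop : Tendsto u atTop (𝓝 0) := by
    have hlog := ((continuousAt_log one_ne_zero).tendsto.comp (hinf.comp tendsto_exp_atTop))
    rw [log_one] at hlog
    refine hlog.congr' ?_
    filter_upwards [eventually_ge_atTop 0] with t ht
    simp only [Function.comp_apply, u, max_eq_right ht]
    rw [log_div (hpos _ (exp_pos t)).ne' (Real.rpow_pos_of_pos (exp_pos t) s).ne',
      Real.log_rpow (exp_pos t), log_exp, mul_comm]
  obtain ⟨M, hM⟩ := isBounded_iff_forall_norm_le.1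
    (hu.isBounded_range_iff_isBigO_atTop_atBot.2 ⟨htop.isBigO_one ℝ, hbot.isBigO_one ℝ⟩)
  refine ⟨M, fun ξ hξ => ?_⟩
  simpa [u, exp_log hξ, posLog_apply] using hM _ (Set.mem_range_self (log ξ))

def elasticity (f : ℝ → ℝ) (ξ : ℝ) : ℝ := ξ * deriv f ξ / f ξ

theorem abs_elasticity_le {s' f₁ M : ℝ} (hs' : 0 < s') (hpos : ∀ ξ, 0 < ξ → 0 < f ξ)
    (hM : ∀ ξ, 0 < ξ → |log (f ξ) - s * log⁺ ξ| ≤ M)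
    (hge : ∀ ξ, 1 ≤ ξ → |deriv f ξ| ≤ f₁ * ξ ^ (s - 1))
    (hle : ∀ ξ, 0 < ξ → ξ ≤ 1 → |deriv f ξ| ≤ f₁ * ξ ^ (s' - 1)) {ξ : ℝ} (hξ : 0 < ξ) :
    |elasticity f ξ| ≤ f₁ * exp M := by
  have hf := hpos ξ hξ
  have hf₁ : 0 ≤ f₁ := by simpa using (abs_nonneg _).trans (hge 1 le_rfl)
  have hlower : exp (s * log⁺ ξ) ≤ exp M * f ξ := by
    rw [← exp_log hf, ← exp_add]
    exact exp_le_exp.2 (by linarith [(abs_le.1 (hM ξ hξ)).1])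
  have hmul : ξ * |deriv f ξ| ≤ f₁ * exp (s * log⁺ ξ) := by
    rcases le_total 1 ξ with h1 | h1
    · calc ξ * |deriv f ξ| ≤ ξ * (f₁ * ξ ^ (s - 1)) := by gcongr; exact hge ξ h1
        _ = f₁ * ξ ^ s := by rw [Real.rpow_sub hξ, Real.rpow_one]; field_simp
        _ = f₁ * exp (s * log⁺ ξ) := by
          rw [posLog_eq_log (by rwa [abs_of_pos hξ]), Real.rpow_def_of_pos hξ, mul_comm s]
    · calc ξ * |deriv f ξ| ≤ ξ * (f₁ * ξ ^ (s' - 1)) := by gcongr; exact hle ξ hξ h1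
        _ = f₁ * ξ ^ s' := by rw [Real.rpow_sub hξ, Real.rpow_one]; field_simp
        _ ≤ f₁ * 1 := by gcongr; exact Real.rpow_le_one hξ.le h1 hs'.le
        _ = f₁ * exp (s * log⁺ ξ) := by
          rw [(posLog_eq_zero_iff ξ).2 (by rwa [abs_of_pos hξ]), mul_zero, exp_zero]
  rw [elasticity, abs_div, abs_mul, abs_of_pos hξ, abs_of_pos hf, div_le_iff₀ hf]
  calc ξ * |deriv f ξ| ≤ f₁ * exp (s * log⁺ ξ) := hmul
    _ ≤ f₁ * (exp M * f ξ) := by gcongr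
    _ = f₁ * exp M * f ξ := by ring

theorem hasDerivAt_log_comp_two_rpow {g : ℝ → ℝ} {g' x : ℝ} (hg : HasDerivAt g g' x)
    (hf : DifferentiableAt ℝ f (2 ^ g x)) (hpos : 0 < f (2 ^ g x)) :
    HasDerivAt (fun y => log (f (2 ^ g y))) (log 2 * elasticity f (2 ^ g x) * g') x := by
  have h := (hf.hasDerivAt.comp x (hg.const_rpow two_pos)).log hpos.ne'
  convert h using 1
  · rfl
  · simp only [elasticity, Function.comp_apply]
    field_simp

end KernelGrowth

section TailAverage

def tailAvg (f : ℤ → ℝ) (n : ℤ) : ℝ := ∑' i : ℕ, f (n + i) / 2 ^ (i + 1)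

theorem hasSum_affine_div_two_pow (a b : ℝ) :
    HasSum (fun i : ℕ => (a + b * i) / 2 ^ (i + 1)) (a + b) := by
  have hlin := hasSum_coe_mul_geometric_of_norm_lt_one (𝕜 := ℝ) (r := 2⁻¹) (by norm_num)
  norm_num at hlin
  convert (hasSum_geometric_two' a).add (hlin.mul_left (b / 2)) using 1
  · ext i
    rw [one_div, inv_pow]
    field_simp
    ring
  · ring

variable {f : ℤ → ℝ}

theorem summable_tailAvg_of_abs_le {C : ℝ} (hf : ∀ m, |f m| ≤ C * (1 + |(m : ℝ)|)) (n : ℤ) :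
    Summable fun i : ℕ => f (n + i) / 2 ^ (i + 1) := by
  refine (hasSum_affine_div_two_pow (C * (1 + |(n : ℝ)|)) C).summable.of_norm_bounded fun i => ?_
  have hC : 0 ≤ C := by simpa using (abs_nonneg _).trans (hf 0)
  rw [Real.norm_eq_abs, abs_div, abs_of_pos (by positivity : (0 : ℝ) < 2 ^ (i + 1))]
  gcongr
  calc |f (n + i)| ≤ C * (1 + |((n + i : ℤ) : ℝ)|) := hf _
    _ ≤ C * (1 + (|(n : ℝ)| + i)) := by
      gcongr
      push_cast
      exact (abs_add_le _ _).trans_eq (by rw [Nat.abs_cast])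
    _ = C * (1 + |(n : ℝ)|) + C * i := by ring

theorem two_mul_tailAvg {n : ℤ} (hf : Summable fun i : ℕ => f (n + i) / 2 ^ (i + 1)) :
    2 * tailAvg f n = f n + tailAvg f (n + 1) := by
  have hterm : ∀ i : ℕ,
      2 * (f (n + (i + 1 : ℕ)) / 2 ^ (i + 1 + 1)) = f (n + 1 + i) / 2 ^ (i + 1) := by
    intro i
    rw [pow_succ]
    push_cast
    field_simp
    ring_nf
  rw [tailAvg, tailAvg, hf.tsum_eq_zero_add, mul_add, ← tsum_mul_left]
  simp only [hterm, Nat.cast_zero, add_zero, zero_add, pow_one]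
  field_simp

theorem le_tailAvg_of_affine_le {n : ℤ} (hf : Summable fun i : ℕ => f (n + i) / 2 ^ (i + 1))
    {a b : ℝ} (h : ∀ i : ℕ, a - b * i ≤ f (n + i)) : a - b ≤ tailAvg f n := by
  refine hasSum_le (fun i => ?_)
    (by simpa [sub_eq_add_neg] using hasSum_affine_div_two_pow a (-b)) hf.hasSum
  gcongr
  linarith [h i]

theorem abs_tailAvg_le_of_eq_zero {C : ℝ} {j : ℤ} (hC : ∀ m, |f m| ≤ C)
    (h0 : ∀ m < j, f m = 0) (n : ℤ) : |tailAvg f n| ≤ C * 2 ^ ((n : ℝ) - j) := by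
  have hC0 : 0 ≤ C := (abs_nonneg _).trans (hC 0)
  have hsum : ∀ n, Summable fun i : ℕ => f (n + i) / 2 ^ (i + 1) :=
    summable_tailAvg_of_abs_le fun m => (hC m).trans (le_mul_of_one_le_right hC0 (by simp))
  have hle : ∀ n, |tailAvg f n| ≤ C := fun n => by
    simpa [tailAvg] using tsum_of_norm_bounded (f := fun i : ℕ => f (n + i) / 2 ^ (i + 1))
      (hasSum_affine_div_two_pow C 0) fun i => by
      rw [Real.norm_eq_abs, abs_div, abs_of_pos (by positivity : (0 : ℝ) < 2 ^ (i + 1))]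
      simpa using div_le_div_of_nonneg_right (hC (n + i)) (by positivity)
  rcases le_total j n with hjn | hnj
  · exact (hle n).trans (le_mul_of_one_le_right hC0 (Real.one_le_rpow one_le_two (by
      simpa using (Int.cast_le (R := ℝ)).2 hjn)))
  induction n, hnj using Int.leInductionDown with
  | base => simpa using hle j
  | pred n hnj ih =>
    have hhalf := two_mul_tailAvg (hsum (n - 1))
    rw [h0 (n - 1) (by omega), sub_add_cancel, zero_add] at hhalf
    have hpow : (2 : ℝ) ^ ((n : ℝ) - j) = 2 * 2 ^ (((n - 1 : ℤ) : ℝ) - j) := by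
      rw [show ((n : ℝ) - j) = 1 + (((n - 1 : ℤ) : ℝ) - j) by push_cast; ring,
        Real.rpow_add two_pos, Real.rpow_one]
    rw [hpow, ← hhalf, abs_mul, abs_two] at ih
    linarith

theorem hasDerivAt_tailAvg {F F' : ℝ → ℤ → ℝ} {C x₀ : ℝ} {n : ℤ}
    (hF : ∀ m x, HasDerivAt (fun y => F y m) (F' x m) x) (hF' : ∀ m x, |F' x m| ≤ C)
    (hF₀ : Summable fun i : ℕ => F x₀ (n + i) / 2 ^ (i + 1)) (x : ℝ) :
    HasDerivAt (fun y => tailAvg (F y) n) (tailAvg (F' x) n) x :=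
  hasDerivAt_tsum (hasSum_affine_div_two_pow C 0).summable
    (fun i y => (hF (n + i) y).div_const _)
    (fun i y => by
      rw [Real.norm_eq_abs, abs_div, abs_of_pos (by positivity : (0 : ℝ) < 2 ^ (i + 1))]
      gcongr
      simpa using hF' (n + i) y)
    hF₀ x

theorem hasSum_tailAvg_const_add_sub (hf : ∀ n, Summable fun i : ℕ => f (n + i) / 2 ^ (i + 1))
    (c : ℝ) (n : ℤ) :
    HasSum (fun i : ℕ => (c + (f (n + i + 1) - f (n + i))) / 2 ^ (i + 1))
      (c + (tailAvg f n - f n)) := by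
  have hshift : HasSum (fun i : ℕ => f (n + i + 1) / 2 ^ (i + 1)) (tailAvg f (n + 1)) := by
    convert (hf (n + 1)).hasSum using 3 with i
    · ring_nf
    · rfl
  have := two_mul_tailAvg (hf n)
  convert (hasSum_affine_div_two_pow c 0).add (hshift.sub (hf n).hasSum) using 1
  · ext i
    ring
  · rw [← tailAvg]
    linarith

end TailAverage

theorem hasDerivAt_update_apply {ι : Type*} [DecidableEq ι] (p : ι → ℝ) (k m : ι) (x : ℝ) :
    HasDerivAt (fun y => Function.update p k y m) (if m = k then 1 else 0) x := by
  by_cases h : m = k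
  · subst h
    simpa using hasDerivAt_id' x
  · simpa [Function.update_of_ne h, h] using hasDerivAt_const x (p m)

theorem abs_mul_max_sub_max_le {c d R : ℝ} (hc : 0 ≤ c) (hd : 0 ≤ d) (x : ℝ) {y : ℝ}
    (hy : |y| ≤ R) : |c * (max 0 (x + y) - max 0 x) * d| ≤ c * R * d := by
  have hmax : |max 0 (x + y) - max 0 x| ≤ |y| := by
    simpa [max_comm] using abs_max_sub_max_le_abs (x + y) x 0
  rw [abs_mul, abs_mul, abs_of_nonneg hc, abs_of_nonneg hd]
  gcongr
  exact hmax.trans hy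

theorem posLog_two_rpow (x : ℝ) : log⁺ ((2 : ℝ) ^ x) = max 0 x * log 2 := by
  rw [posLog_apply, Real.log_rpow two_pos, max_mul_of_nonneg _ _ (log_nonneg one_le_two),
    zero_mul]

theorem two_rpow_neg_add_add (n : ℤ) (j : ℕ) :
    (2 : ℝ) ^ (-((n : ℝ) + 1 + j)) = 2 ^ (-(n : ℝ)) / 2 ^ (j + 1) := by
  rw [show -((n : ℝ) + 1 + j) = -(n : ℝ) - ((j + 1 : ℕ) : ℝ) by push_cast; ring,
    Real.rpow_sub two_pos, Real.rpow_natCast]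

namespace Kernels

variable (KD : Kernels)

theorem differentiableAt_k {ξ : ℝ} (hξ : 0 < ξ) : DifferentiableAt ℝ KD.k ξ :=
  (KD.hkC2.contDiffAt (isOpen_Ioi.mem_nhds hξ)).differentiableAt two_ne_zero

theorem differentiableAt_γ {ξ : ℝ} (hξ : 0 < ξ) : DifferentiableAt ℝ KD.γ ξ :=
  (KD.hγC2.contDiffAt (isOpen_Ioi.mem_nhds hξ)).differentiableAt two_ne_zero

theorem exists_abs_log_k_sub_le : ∃ M, ∀ ξ, 0 < ξ → |log (KD.k ξ) - (KD.α + 1) * log⁺ ξ| ≤ M :=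
  exists_abs_log_sub_mul_posLog_le KD.hkC2.continuousOn KD.hkpos KD.hk₀
    (tendsto_nhdsGT_of_isBigO_rpow (by linarith [KD.hαb]) KD.hkZero) KD.hkInfty

theorem exists_abs_log_γ_sub_le : ∃ M, ∀ ξ, 0 < ξ → |log (KD.γ ξ) - KD.β * log⁺ ξ| ≤ M :=
  exists_abs_log_sub_mul_posLog_le KD.hγC2.continuousOn KD.hγpos KD.hγ₀
    (tendsto_nhdsGT_of_isBigO_rpow (by linarith [KD.hβb]) KD.hγZero)
    (tendsto_div_rpow_of_isBigO KD.hβt KD.hγInfty)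

theorem exists_abs_elasticity_k_le : ∃ C, ∀ ξ, 0 < ξ → |elasticity KD.k ξ| ≤ C := by
  obtain ⟨M, hM⟩ := KD.exists_abs_log_k_sub_le
  exact ⟨_, fun ξ hξ => abs_elasticity_le (by linarith [KD.hαb]) KD.hkpos hM
    (fun ξ hξ => by simpa using KD.hk'ge ξ hξ) KD.hk'le hξ⟩

theorem exists_abs_elasticity_γ_le : ∃ C, ∀ ξ, 0 < ξ → |elasticity KD.γ ξ| ≤ C := by
  obtain ⟨M, hM⟩ := KD.exists_abs_log_γ_sub_le
  exact ⟨_, fun ξ hξ => abs_elasticity_le (by linarith [KD.hβb]) KD.hγpos hM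
    KD.hγ'ge KD.hγ'le hξ⟩

theorem zeta_pos (p : ℤ → ℝ) (m : ℤ) : 0 < KD.zeta p m := by
  unfold zeta
  have := KD.hkpos _ (Real.rpow_pos_of_pos two_pos ((m : ℝ) + p m))
  have := KD.hγpos _ (Real.rpow_pos_of_pos two_pos ((m : ℝ) + 1 + p (m + 1)))
  have := Real.log_pos one_lt_two
  positivity

def logZeta (p : ℤ → ℝ) (m : ℤ) : ℝ := log (KD.zeta p m)

theorem logZeta_eq (p : ℤ → ℝ) (m : ℤ) :
    KD.logZeta p m = log (log 2) - ((m : ℝ) + p m) * log 2 + log (KD.k (2 ^ ((m : ℝ) + p m)))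
      - log (KD.γ (2 ^ ((m : ℝ) + 1 + p (m + 1)))) := by
  have hk := KD.hkpos _ (Real.rpow_pos_of_pos two_pos ((m : ℝ) + p m))
  have hγ := KD.hγpos _ (Real.rpow_pos_of_pos two_pos ((m : ℝ) + 1 + p (m + 1)))
  have hlog2 := Real.log_pos one_lt_two
  rw [logZeta, zeta, log_div (by positivity) hγ.ne', log_mul (by positivity) hk.ne',
    log_mul hlog2.ne' (by positivity), Real.log_rpow two_pos]
  ring

theorem log_thetaSeq (p : ℤ → ℝ) (m : ℤ) :
    log (KD.thetaSeq p m) = log 2 + (KD.logZeta p (m + 1) - KD.logZeta p m) := by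
  have h0 := KD.zeta_pos p m
  have h1 := KD.zeta_pos p (m + 1)
  rw [thetaSeq, log_div (by positivity) h0.ne', log_mul two_ne_zero h1.ne', logZeta, logZeta]
  ring

def logZetaProfile (m : ℤ) : ℝ :=
  (-(m : ℝ) + (KD.α + 1) * max 0 (m : ℝ) - KD.β * max 0 ((m : ℝ) + 1)) * log 2

theorem exists_abs_logZeta_sub_profile_le (R : ℝ) : ∃ D, ∀ p : ℤ → ℝ, (∀ m, |p m| ≤ R) →
    ∀ m, |KD.logZeta p m - KD.logZetaProfile m| ≤ D := by
  obtain ⟨Mk, hMk⟩ := KD.exists_abs_log_k_sub_le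
  obtain ⟨Mg, hMg⟩ := KD.exists_abs_log_γ_sub_le
  refine ⟨|log (log 2)| + Mk + Mg + (KD.α + KD.β + 2) * R * log 2, fun p hp m => ?_⟩
  have hk := abs_le.1 (hMk _ (Real.rpow_pos_of_pos two_pos ((m : ℝ) + p m)))
  have hγ := abs_le.1 (hMg _ (Real.rpow_pos_of_pos two_pos ((m : ℝ) + 1 + p (m + 1))))
  rw [posLog_two_rpow] at hk hγ
  have hlog2 := log_pos one_lt_two
  have hx := abs_le.1 (abs_mul_max_sub_max_le (c := KD.α + 1) (by linarith [KD.hα.1]) hlog2.le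
    (m : ℝ) (hp m))
  have hy := abs_le.1 (abs_mul_max_sub_max_le (c := KD.β) (by linarith [KD.hβ.1]) hlog2.le
    ((m : ℝ) + 1) (hp (m + 1)))
  have hpm : |p m * log 2| ≤ R * log 2 := by
    rw [abs_mul, abs_of_pos hlog2]
    gcongr
    exact hp m
  have hlog := abs_le.1 (le_refl |log (log 2)|)
  rw [abs_le, logZeta_eq, logZetaProfile]
  constructor <;> linarith [abs_le.1 hpm]

theorem abs_logZetaProfile_le (m : ℤ) :
    |KD.logZetaProfile m| ≤ (KD.α + KD.β + 2) * log 2 * (1 + |(m : ℝ)|) := by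
  have hα := KD.hα.1
  have hβ : 0 ≤ KD.β := by linarith [KD.hβ.1]
  have h0 : max 0 (m : ℝ) ≤ |(m : ℝ)| := max_le (abs_nonneg _) (le_abs_self _)
  have h1 : max 0 ((m : ℝ) + 1) ≤ |(m : ℝ)| + 1 :=
    max_le (by positivity) (by linarith [le_abs_self (m : ℝ)])
  have hk : 0 ≤ (KD.α + 1) * max 0 (m : ℝ) := by positivity
  have hk' : (KD.α + 1) * max 0 (m : ℝ) ≤ (KD.α + 1) * |(m : ℝ)| := by gcongr
  have hg : 0 ≤ KD.β * max 0 ((m : ℝ) + 1) := by positivity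
  have hg' : KD.β * max 0 ((m : ℝ) + 1) ≤ KD.β * (|(m : ℝ)| + 1) := by gcongr
  have hinner : |-(m : ℝ) + (KD.α + 1) * max 0 (m : ℝ) - KD.β * max 0 ((m : ℝ) + 1)| ≤
      (KD.α + KD.β + 2) * (1 + |(m : ℝ)|) := by
    rw [abs_le]
    constructor <;> nlinarith [abs_le.1 (le_refl |(m : ℝ)|), abs_nonneg (m : ℝ)]
  rw [logZetaProfile, abs_mul, abs_of_pos (log_pos one_lt_two)]
  nlinarith [log_pos one_lt_two]

theorem exists_abs_logZeta_le (R : ℝ) : ∃ C, ∀ p : ℤ → ℝ, (∀ m, |p m| ≤ R) →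
    ∀ m, |KD.logZeta p m| ≤ C * (1 + |(m : ℝ)|) := by
  obtain ⟨D, hD⟩ := KD.exists_abs_logZeta_sub_profile_le R
  refine ⟨|D| + (KD.α + KD.β + 2) * log 2, fun p hp m => ?_⟩
  have h1 : 1 ≤ 1 + |(m : ℝ)| := by simp
  calc |KD.logZeta p m| ≤ |D| + |KD.logZetaProfile m| := by
        linarith [abs_sub_abs_le_abs_sub (KD.logZeta p m) (KD.logZetaProfile m), hD p hp m,
          le_abs_self D]
    _ ≤ |D| * (1 + |(m : ℝ)|) + (KD.α + KD.β + 2) * log 2 * (1 + |(m : ℝ)|) := by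
        gcongr
        · exact le_mul_of_one_le_right (abs_nonneg D) h1
        · exact KD.abs_logZetaProfile_le m
    _ = _ := by ring

theorem summable_tailAvg_logZeta {R : ℝ} {p : ℤ → ℝ} (hp : ∀ m, |p m| ≤ R) (n : ℤ) :
    Summable fun i : ℕ => KD.logZeta p (n + i) / 2 ^ (i + 1) := by
  obtain ⟨C, hC⟩ := KD.exists_abs_logZeta_le R
  exact summable_tailAvg_of_abs_le (hC p hp) n

theorem exists_le_tailAvg_logZeta (R : ℝ) : ∃ D, ∀ p : ℤ → ℝ, (∀ m, |p m| ≤ R) →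
    (∀ n : ℤ, n ≤ 0 → -(n : ℝ) * log 2 - D ≤ tailAvg (KD.logZeta p) n) ∧
    (∀ n : ℤ, 0 ≤ n → (KD.α - KD.β) * n * log 2 - D ≤ tailAvg (KD.logZeta p) n) := by
  obtain ⟨D, hD⟩ := KD.exists_abs_logZeta_sub_profile_le R
  have hlog2 := log_pos one_lt_two
  have hα := KD.hα.1
  have hβ : 0 ≤ KD.β := by linarith [KD.hβ.1]
  refine ⟨(2 * KD.β + 1) * log 2 + D, fun p hp => ⟨fun n hn => ?_, fun n hn => ?_⟩⟩
  · refine le_trans (le_of_eq (by ring))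
      (le_tailAvg_of_affine_le (KD.summable_tailAvg_logZeta hp n)
        (a := (-(n : ℝ) - KD.β) * log 2 - D) (b := (1 + KD.β) * log 2) fun i => ?_)
    have hn' : (n : ℝ) ≤ 0 := by exact_mod_cast hn
    have hmax : max 0 (((n + i : ℤ) : ℝ) + 1) ≤ i + 1 :=
      max_le (by positivity) (by push_cast; linarith)
    have hprofile :
        (-(n : ℝ) - KD.β - (1 + KD.β) * i) * log 2 ≤ KD.logZetaProfile (n + i) := by
      rw [logZetaProfile]
      refine mul_le_mul_of_nonneg_right ?_ hlog2.le
      have : 0 ≤ (KD.α + 1) * max 0 ((n + i : ℤ) : ℝ) := by positivity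
      have : KD.β * max 0 (((n + i : ℤ) : ℝ) + 1) ≤ KD.β * (i + 1) := by gcongr
      push_cast at *
      linarith
    linarith [(abs_le.1 (hD p hp (n + i))).1]
  · refine le_trans ?_ (le_tailAvg_of_affine_le (KD.summable_tailAvg_logZeta hp n)
      (a := ((KD.α - KD.β) * n - KD.β) * log 2 - D) (b := (KD.β - KD.α) * log 2) fun i => ?_)
    · nlinarith
    have hni : (0 : ℝ) ≤ ((n + i : ℤ) : ℝ) := by exact_mod_cast (by omega : (0 : ℤ) ≤ n + i)
    have hprofile : KD.logZetaProfile (n + i) = ((KD.α - KD.β) * (n + i) - KD.β) * log 2 := by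
      rw [logZetaProfile, max_eq_right hni, max_eq_right (by linarith)]
      push_cast
      ring
    linarith [(abs_le.1 (hD p hp (n + i))).1]

/-- `∂ log ζ_m(p) / ∂p_k`. -/
def logZetaPartial (p : ℤ → ℝ) (k m : ℤ) : ℝ :=
  log 2 * ((if m = k then 1 else 0) * (elasticity KD.k (2 ^ ((m : ℝ) + p m)) - 1) -
    (if m + 1 = k then 1 else 0) * elasticity KD.γ (2 ^ ((m : ℝ) + 1 + p (m + 1))))

theorem hasDerivAt_logZeta_update (p : ℤ → ℝ) (k m : ℤ) (x : ℝ) :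
    HasDerivAt (fun y => KD.logZeta (Function.update p k y) m)
      (KD.logZetaPartial (Function.update p k x) k m) x := by
  simp only [logZeta_eq]
  have hu := (hasDerivAt_update_apply p k m x).const_add (m : ℝ)
  have hv := (hasDerivAt_update_apply p k (m + 1) x).const_add ((m : ℝ) + 1)
  have hk := hasDerivAt_log_comp_two_rpow hu (KD.differentiableAt_k (by positivity))
    (KD.hkpos _ (by positivity))
  have hγ := hasDerivAt_log_comp_two_rpow hv (KD.differentiableAt_γ (by positivity))
    (KD.hγpos _ (by positivity))
  refine ((((hasDerivAt_const x (log (log 2))).sub (hu.mul_const (log 2))).add hk).sub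
    hγ).congr_deriv ?_
  unfold logZetaPartial
  ring

theorem logZetaPartial_eq_zero (p : ℤ → ℝ) {k m : ℤ} (hm : m ≠ k) (hm' : m + 1 ≠ k) :
    KD.logZetaPartial p k m = 0 := by
  simp [logZetaPartial, hm, hm']

theorem exists_abs_logZetaPartial_le :
    ∃ C, 0 < C ∧ ∀ p : ℤ → ℝ, ∀ k m, |KD.logZetaPartial p k m| ≤ C := by
  obtain ⟨Ck, hCk⟩ := KD.exists_abs_elasticity_k_le
  obtain ⟨Cg, hCg⟩ := KD.exists_abs_elasticity_γ_le
  have hCk0 := (abs_nonneg _).trans (hCk 1 one_pos)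
  have hCg0 := (abs_nonneg _).trans (hCg 1 one_pos)
  have hlog2 := log_pos one_lt_two
  refine ⟨log 2 * (Ck + 1 + Cg), by positivity, fun p k m => ?_⟩
  have hk := abs_le.1 (hCk (2 ^ ((m : ℝ) + p m)) (by positivity))
  have hg := abs_le.1 (hCg (2 ^ ((m : ℝ) + 1 + p (m + 1))) (by positivity))
  rw [logZetaPartial, abs_mul, abs_of_pos hlog2]
  gcongr
  rw [abs_le]
  split_ifs <;> constructor <;> linarith

theorem tailAvg_logZetaPartial_eq_zero (p : ℤ → ℝ) {k n : ℤ} (hkn : k < n) :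
    tailAvg (KD.logZetaPartial p k) n = 0 := by
  refine (tsum_congr fun i : ℕ => ?_).trans tsum_zero
  rw [KD.logZetaPartial_eq_zero p (by omega) (by omega), zero_div]

theorem abs_tailAvg_logZetaPartial_le {p : ℤ → ℝ} {k : ℤ} {C : ℝ}
    (hC : ∀ m, |KD.logZetaPartial p k m| ≤ C) (n : ℤ) :
    |tailAvg (KD.logZetaPartial p k) n| ≤ 2 * C * 2 ^ ((n : ℝ) - k) := by
  have h := abs_tailAvg_le_of_eq_zero (j := k - 1) hC
    (fun m hm => KD.logZetaPartial_eq_zero p (by omega) (by omega)) n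
  rwa [show (n : ℝ) - ((k - 1 : ℤ) : ℝ) = 1 + ((n : ℝ) - k) by push_cast; ring,
    Real.rpow_add two_pos, Real.rpow_one, ← mul_assoc, mul_comm C] at h

theorem mubar_eq (A : ℝ) (p : ℤ → ℝ) (n : ℤ) :
    KD.mubar A p n =
      exp (-A * 2 ^ (n : ℝ)) * exp (-tailAvg (fun m => log (KD.thetaSeq p m)) n) := by
  rw [mubar, tailAvg, ← tsum_mul_left]
  congr 2
  rw [← tsum_neg]
  congr 1
  ext j
  rw [two_rpow_neg_add_add, Real.rpow_neg zero_le_two]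
  field_simp

theorem summable_thetaSeq {R : ℝ} {p : ℤ → ℝ} (hp : ∀ m, |p m| ≤ R) (n : ℤ) :
    Summable fun j : ℕ => (2 : ℝ) ^ (-((n : ℝ) + 1 + j)) * log (KD.thetaSeq p (n + j)) := by
  have := (hasSum_tailAvg_const_add_sub (KD.summable_tailAvg_logZeta hp) (log 2) n).summable
    |>.mul_left ((2 : ℝ) ^ (-(n : ℝ)))
  refine this.congr fun j => ?_
  rw [two_rpow_neg_add_add, log_thetaSeq]
  ring

theorem mbar_eq {R : ℝ} {p : ℤ → ℝ} (hp : ∀ m, |p m| ≤ R) (A : ℝ) (n : ℤ) :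
    KD.mbar A p n = exp (-A * 2 ^ (n : ℝ) - tailAvg (KD.logZeta p) n) := by
  have htheta : tailAvg (fun m => log (KD.thetaSeq p m)) n =
      log 2 + (tailAvg (KD.logZeta p) n - KD.logZeta p n) := by
    simp only [log_thetaSeq]
    exact (hasSum_tailAvg_const_add_sub (KD.summable_tailAvg_logZeta hp) _ n).tsum_eq
  have hζ : exp (KD.logZeta p n) = KD.zeta p n := exp_log (KD.zeta_pos p n)
  rw [mbar, mubar_eq, htheta, ← hζ,
    show -(log 2 + (tailAvg (KD.logZeta p) n - KD.logZeta p n)) =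
      KD.logZeta p n - tailAvg (KD.logZeta p) n - log 2 by ring,
    exp_sub, exp_log two_pos, exp_sub, exp_sub]
  field_simp

theorem mbar_pos (A : ℝ) (p : ℤ → ℝ) (n : ℤ) : 0 < KD.mbar A p n := by
  have := KD.zeta_pos p n
  rw [mbar, mubar]
  positivity

variable {R : ℝ} {p : ℤ → ℝ} (hp : ∀ m, |p m| ≤ R)
include hp

theorem mbar_succ (A : ℝ) (n : ℤ) : KD.mbar A p (n + 1) = KD.zeta p n * KD.mbar A p n ^ 2 := by
  have hrec := two_mul_tailAvg (KD.summable_tailAvg_logZeta hp n)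
  rw [KD.mbar_eq hp, KD.mbar_eq hp, ← exp_log (KD.zeta_pos p n), ← exp_nat_mul, ← exp_add]
  congr 1
  push_cast
  rw [Real.rpow_add two_pos, Real.rpow_one, ← logZeta]
  linarith

theorem hasDerivAt_mbar_A (A : ℝ) (n : ℤ) :
    HasDerivAt (fun A' => KD.mbar A' p n) (-(2 : ℝ) ^ (n : ℝ) * KD.mbar A p n) A := by
  simp only [KD.mbar_eq hp]
  refine ((((hasDerivAt_id' A).fun_neg.mul_const ((2 : ℝ) ^ (n : ℝ))).sub_const
    (tailAvg (KD.logZeta p) n)).exp).congr_deriv ?_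
  ring

theorem isBigO_mbar_atBot {A : ℝ} (hA : 0 ≤ A) :
    (fun n : ℤ => KD.mbar A p n) =O[atBot] fun n : ℤ => (2 : ℝ) ^ (n : ℝ) := by
  obtain ⟨D, hD⟩ := KD.exists_le_tailAvg_logZeta R
  refine IsBigO.of_bound (exp D) ?_
  filter_upwards [eventually_le_atBot 0] with n hn
  have hT := (hD p hp).1 n hn
  have hA2 : 0 ≤ A * 2 ^ (n : ℝ) := by positivity
  rw [norm_of_nonneg (KD.mbar_pos A p n).le, norm_of_nonneg (by positivity), KD.mbar_eq hp,
    show exp D * 2 ^ (n : ℝ) = exp (D + log 2 * n) by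
      rw [exp_add, Real.rpow_def_of_pos two_pos]]
  gcongr
  linarith

theorem isBigO_mbar_atTop (A : ℝ) :
    (fun n : ℤ => KD.mbar A p n) =O[atTop]
      fun n : ℤ => (2 : ℝ) ^ ((KD.β - KD.α) * n) * exp (-A * 2 ^ (n : ℝ)) := by
  obtain ⟨D, hD⟩ := KD.exists_le_tailAvg_logZeta R
  refine IsBigO.of_bound (exp D) ?_
  filter_upwards [eventually_ge_atTop 0] with n hn
  have hT := (hD p hp).2 n hn
  rw [norm_of_nonneg (KD.mbar_pos A p n).le, norm_of_nonneg (by positivity), KD.mbar_eq hp,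
    Real.rpow_def_of_pos two_pos ((KD.β - KD.α) * n), ← exp_add, ← exp_add]
  gcongr
  linarith

theorem tendsto_mbar_cofinite {A : ℝ} (hA : 0 < A) :
    Tendsto (fun n => KD.mbar A p n) cofinite (𝓝 0) := by
  have hbot : Tendsto (fun n : ℤ => (2 : ℝ) ^ (n : ℝ)) atBot (𝓝 0) :=
    (tendsto_rpow_atBot_of_base_gt_one 2 one_lt_two).comp
      (tendsto_intCast_atBot_iff.2 tendsto_id)
  have htop : Tendsto (fun n : ℤ => (2 : ℝ) ^ ((KD.β - KD.α) * n) * exp (-A * 2 ^ (n : ℝ)))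
      atTop (𝓝 0) := by
    have h2 := (tendsto_rpow_atTop_of_base_gt_one 2 one_lt_two).comp tendsto_intCast_atTop_atTop
    refine ((tendsto_rpow_mul_exp_neg_mul_atTop_nhds_zero (KD.β - KD.α) A hA).comp h2).congr
      fun n => ?_
    simp only [Function.comp_apply, ← Real.rpow_mul zero_le_two, neg_mul]
    ring_nf
  rw [Int.cofinite_eq]
  exact ((KD.isBigO_mbar_atBot hp hA.le).trans_tendsto hbot).sup
    ((KD.isBigO_mbar_atTop hp A).trans_tendsto htop)

theorem hasDerivAt_mbar_update (A : ℝ) (k n : ℤ) :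
    HasDerivAt (fun x => KD.mbar A (Function.update p k x) n)
      (-tailAvg (KD.logZetaPartial p k) n * KD.mbar A p n) (p k) := by
  have hbdd : ∀ x m, |Function.update p k x m| ≤ max R |x| := by
    intro x m
    by_cases h : m = k
    · subst h
      simp
    · simpa [Function.update_of_ne h] using Or.inl (hp m)
  obtain ⟨C, -, hC⟩ := KD.exists_abs_logZetaPartial_le
  have hT := hasDerivAt_tailAvg (F := fun y => KD.logZeta (Function.update p k y))
    (F' := fun y => KD.logZetaPartial (Function.update p k y) k) (x₀ := p k)
    (KD.hasDerivAt_logZeta_update p k) (fun m x => hC _ k m)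
    (by simpa using KD.summable_tailAvg_logZeta hp n) (p k)
  simp only [Function.update_eq_self] at hT
  simp only [fun x => KD.mbar_eq (hbdd x) A n]
  refine (hT.const_sub (-A * 2 ^ (n : ℝ))).exp.congr_deriv ?_
  rw [KD.mbar_eq hp, Function.update_eq_self]
  ring

end Kernels

/-- the coefficients `m̄_n(A,p)` are well defined, positive, bounded,
solve the recurrence `m̄_{n+1} = ζ_n(p) m̄_n²`, have the two-sided asymptotics,
and satisfy the derivative estimates (Lemma 2.4). -/
theorem mbar_properties (KD : Kernels) :
    ∃ c : ℝ, 0 < c ∧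
      ∀ A : ℝ, 0 < A → ∀ δ₀ : ℝ, 0 < δ₀ → δ₀ < 1 →
      ∀ p : ℤ → ℝ, (∀ n, |p n| ≤ δ₀) →
        (∀ n : ℤ, Summable (fun j : ℕ =>
          (2:ℝ) ^ (-((n:ℝ) + 1 + (j:ℝ))) * Real.log (KD.thetaSeq p (n + (j:ℤ))))) ∧
        (∀ n : ℤ, 0 < KD.mbar A p n) ∧
        (∃ B : ℝ, ∀ n : ℤ, KD.mbar A p n ≤ B) ∧
        (∀ n : ℤ, KD.mbar A p (n + 1) = KD.zeta p n * KD.mbar A p n ^ 2) ∧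
        ((fun n : ℤ => KD.mbar A p n) =O[atBot] fun n : ℤ => (2:ℝ) ^ (n:ℝ)) ∧
        ((fun n : ℤ => KD.mbar A p n) =O[atTop]
          fun n : ℤ => (2:ℝ) ^ ((KD.β - KD.α) * (n:ℝ)) * Real.exp (-A * (2:ℝ) ^ (n:ℝ))) ∧
        (∀ n : ℤ, HasDerivAt (fun A' => KD.mbar A' p n)
          (-((2:ℝ) ^ (n:ℝ)) * KD.mbar A p n) A) ∧
        (∀ n k : ℤ, k < n →
          HasDerivAt (fun x => KD.mbar A (Function.update p k x) n) 0 (p k)) ∧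
        (∀ n k : ℤ, n ≤ k → ∃ d : ℝ,
          HasDerivAt (fun x => KD.mbar A (Function.update p k x) n) d (p k) ∧
            |d| ≤ c * (2:ℝ) ^ ((n:ℝ) - (k:ℝ)) * KD.mbar A p n) := by
  obtain ⟨C, hC, hCbound⟩ := KD.exists_abs_logZetaPartial_le
  refine ⟨2 * C, by positivity, fun A hA δ₀ _ _ p hp => ?_⟩
  obtain ⟨B, hB⟩ := (KD.tendsto_mbar_cofinite hp hA).bddAbove_range_of_cofinite
  refine ⟨KD.summable_thetaSeq hp, KD.mbar_pos A p, ⟨B, fun n => hB ⟨n, rfl⟩⟩, KD.mbar_succ hp A,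
    KD.isBigO_mbar_atBot hp hA.le, KD.isBigO_mbar_atTop hp A, KD.hasDerivAt_mbar_A hp A,
    fun n k hkn => ?_, fun n k _ => ⟨_, KD.hasDerivAt_mbar_update hp A k n, ?_⟩⟩
  · simpa [KD.tailAvg_logZetaPartial_eq_zero p hkn] using KD.hasDerivAt_mbar_update hp A k n
  · rw [abs_mul, abs_neg, abs_of_pos (KD.mbar_pos A p n)]
    exact mul_le_mul_of_nonneg_right (KD.abs_tailAvg_logZetaPartial_le (hCbound p k) n)
      (KD.mbar_pos A p n).le
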